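/- If a finite directed graph G contains a spanning tree and x ∈ ℝⁿ is not a constant vector, then there exists an agent i attaining the maximum of x that has an in-neighbor j with xⱼ < xᵢ, or there exists an agent m attaining the minimum of x that has an in-neighbor j with xⱼ > x_m. -/

import Mathlib

/-!
If no maximizer of `x` has an in-neighbor with a smaller value, the set of maximizers is closed
under taking in-neighbors, so it contains the root of the spanning tree, which reaches one of its
elements; likewise for the minimizers. Then the root attains both the maximum and the minimum of
`x`, so `x` is constant.
-/

theorem Relation.ReflTransGen.of_backward_closed {α : Type*} {r : α → α → Prop} {P : α → Prop}
    (hP : ∀ a b, r a b → P b → P a) {a b : α} (h : ReflTransGen r a b) (hb : P b) : P a :=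
  h.head_induction_on (motive := fun a _ => P a) hb fun hac _ hc => hP _ _ hac hc

/-- If a finite digraph contains a spanning tree (some root reaches every vertex)
and `x` is not constant, then some agent attaining the maximum has an in-neighbor
with strictly smaller state, or some agent attaining the minimum has an
in-neighbor with strictly larger state. -/
theorem stmt_17 (ι : Type*) [Fintype ι] (E : ι → ι → Prop)
    (hspan : ∃ r : ι, ∀ v, Relation.ReflTransGen E r v)
    (x : ι → ℝ) (hnc : ∃ p q : ι, x p ≠ x q) :
    (∃ i, (∀ k, x k ≤ x i) ∧ ∃ j, E j i ∧ x j < x i) ∨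
    (∃ m, (∀ k, x m ≤ x k) ∧ ∃ j, E j m ∧ x m < x j) := by
  by_contra! ⟨hmax, hmin⟩
  obtain ⟨r, hr⟩ := hspan
  obtain ⟨p, q, hpq⟩ := hnc
  have : Nonempty ι := ⟨p⟩
  obtain ⟨i, hi⟩ := Finite.exists_max x
  obtain ⟨m, hm⟩ := Finite.exists_min x
  have hr_max : ∀ k, x k ≤ x r :=
    (hr i).of_backward_closed (P := fun i => ∀ k, x k ≤ x i)
      (fun j i hji hi k => (hi k).trans (hmax i hi j hji)) hi
  have hr_min : ∀ k, x r ≤ x k :=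
    (hr m).of_backward_closed (P := fun m => ∀ k, x m ≤ x k)
      (fun j m hjm hm k => (hmin m hm j hjm).trans (hm k)) hm
  exact hpq (le_antisymm ((hr_max p).trans (hr_min q)) ((hr_max q).trans (hr_min p)))
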